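/- Consider the simplified dynamics on a path P with ℓ ≥ 1 edges, with respect to a valid path matching M_P. Let α̂^t be the trajectory from initial condition α̂⁰ with boundary conditions {b_{1,L}^t}, {b_{1,R}^t}, and let β̂^t be the trajectory from initial condition β̂⁰ with boundary conditions {b_{2,L}^t}, {b_{2,R}^t}. If α̂⁰ ⪰ β̂⁰ in the path domination ordering, and if b_{1,L}^t ≥ b_{2,L}^t and (−1)^ℓ b_{1,R}^t ≥ (−1)^ℓ b_{2,R}^t for all t ≥ 0, then α̂^t ⪰ β̂^t for all t ≥ 0. -/
import Mathlib


/- State of the simplified dynamics on the path `0 − 1 − ⋯ − ℓ`: to edge `i`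
(joining `i` and `i+1`) we associate the pair
`(α̂_{i→i+1}, α̂_{i+1→i})` of messages. -/

/-- Offer `ô_{i→i+1}` along edge `i` (from `i` to `i+1`). -/
noncomputable def offR (w : ℕ → ℝ) (M : ℕ → Bool) (s : ℕ → ℝ × ℝ) (i : ℕ) : ℝ :=
  if M i then (w i - (s i).1 + (s i).2) / 2 else w i - (s i).1

/-- Offer `ô_{i+1→i}` along edge `i` (from `i+1` to `i`). -/
noncomputable def offL (w : ℕ → ℝ) (M : ℕ → Bool) (s : ℕ → ℝ × ℝ) (i : ℕ) : ℝ :=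
  if M i then (w i - (s i).2 + (s i).1) / 2 else w i - (s i).2

/-- One step of the simplified dynamics on the path with `ℓ` edges, matching `M`,
damping `κ` and boundary values `bL` (for `α̂_{0→1}`) and `bR` (for `α̂_{ℓ→ℓ−1}`). -/
noncomputable def pstep (ℓ : ℕ) (w : ℕ → ℝ) (M : ℕ → Bool) (κ : ℝ) (bL bR : ℝ)
    (s : ℕ → ℝ × ℝ) : ℕ → ℝ × ℝ := fun i =>
  (if i = 0 then κ * bL + (1 - κ) * (s 0).1
    else κ * offR w M s (i - 1) + (1 - κ) * (s i).1,
   if i = ℓ - 1 then κ * bR + (1 - κ) * (s (ℓ - 1)).2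
    else κ * offL w M s (i + 1) + (1 - κ) * (s i).2)

/-- A valid path matching: alternate edges of the path are included. -/
def AltMatching (ℓ : ℕ) (M : ℕ → Bool) : Prop :=
  ∀ i, i + 1 < ℓ → (M i = true ↔ M (i + 1) = false)

/-- Sup-norm distance between two states, over all directed edges of the path. -/
noncomputable def supDist (ℓ : ℕ) (s s' : ℕ → ℝ × ℝ) : ℝ :=
  (Finset.range ℓ).fold max 0 fun i =>
    max |(s i).1 - (s' i).1| |(s i).2 - (s' i).2|

/-- The path domination ordering `α ⪰ β`: for even `i`, `α_{i→i+1} ≥ β_{i→i+1}` and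
`α_{i+1→i} ≤ β_{i+1→i}`; for odd `i` the inequalities are reversed. -/
def PathDom (ℓ : ℕ) (s s' : ℕ → ℝ × ℝ) : Prop :=
  ∀ i < ℓ, (Even i → (s' i).1 ≤ (s i).1 ∧ (s i).2 ≤ (s' i).2) ∧
    (¬Even i → (s i).1 ≤ (s' i).1 ∧ (s' i).2 ≤ (s i).2)

private lemma offR_mono (w : ℕ → ℝ) (M : ℕ → Bool) (s s' : ℕ → ℝ × ℝ) (j : ℕ)
    (h1 : (s' j).1 ≤ (s j).1) (h2 : (s j).2 ≤ (s' j).2) :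
    offR w M s j ≤ offR w M s' j := by
  unfold offR; split <;> linarith

private lemma offL_mono (w : ℕ → ℝ) (M : ℕ → Bool) (s s' : ℕ → ℝ × ℝ) (j : ℕ)
    (h1 : (s' j).1 ≤ (s j).1) (h2 : (s j).2 ≤ (s' j).2) :
    offL w M s' j ≤ offL w M s j := by
  unfold offL; split <;> linarith

private lemma pstep_dom (ℓ : ℕ) (hℓ : 1 ≤ ℓ) (w : ℕ → ℝ) (M : ℕ → Bool)
    (κ : ℝ) (hκ0 : 0 ≤ κ) (hκ1 : κ ≤ 1) (bL bR bL' bR' : ℝ)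
    (hbL : bL' ≤ bL) (hbR : (-1:ℝ)^ℓ * bR' ≤ (-1:ℝ)^ℓ * bR)
    (s s' : ℕ → ℝ × ℝ) (h : PathDom ℓ s s') :
    PathDom ℓ (pstep ℓ w M κ bL bR s) (pstep ℓ w M κ bL' bR' s') := by
  have key : ∀ a a' c c' : ℝ, a' ≤ a → c' ≤ c →
      κ * a' + (1 - κ) * c' ≤ κ * a + (1 - κ) * c := by
    intro a a' c c' ha hc; nlinarith
  intro i hi
  constructor
  · intro hev
    have hev2 : i % 2 = 0 := Nat.even_iff.mp hev
    constructor
    · simp only [pstep]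
      split_ifs with h0
      · exact key _ _ _ _ hbL (((h 0 hℓ).1 Even.zero).1)
      · have hodd : ¬ Even (i - 1) := by rw [Nat.even_iff]; omega
        have hj := (h (i - 1) (by omega)).2 hodd
        exact key _ _ _ _ (offR_mono w M s' s (i - 1) hj.1 hj.2)
          (((h i hi).1 hev).1)
    · simp only [pstep]
      split_ifs with h0
      · have hoddℓ : Odd ℓ := Nat.odd_iff.mpr (by omega)
        have hneg : ((-1:ℝ))^ℓ = -1 := Odd.neg_one_pow hoddℓ
        rw [hneg] at hbR
        have hb : bR ≤ bR' := by linarith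
        have hj := (h (ℓ - 1) (by omega)).1 (h0 ▸ hev)
        exact key _ _ _ _ hb hj.2
      · have hodd : ¬ Even (i + 1) := by rw [Nat.even_iff]; omega
        have hj := (h (i + 1) (by omega)).2 hodd
        exact key _ _ _ _ (offL_mono w M s' s (i + 1) hj.1 hj.2)
          (((h i hi).1 hev).2)
  · intro hod
    have hod2 : i % 2 = 1 := Nat.odd_iff.mp (Nat.not_even_iff_odd.mp hod)
    constructor
    · simp only [pstep]
      split_ifs with h0
      · omega
      · have hevp : Even (i - 1) := by rw [Nat.even_iff]; omega
        have hj := (h (i - 1) (by omega)).1 hevp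
        exact key _ _ _ _ (offR_mono w M s s' (i - 1) hj.1 hj.2)
          (((h i hi).2 hod).1)
    · simp only [pstep]
      split_ifs with h0
      · have hevℓ : Even ℓ := Nat.even_iff.mpr (by omega)
        have hneg : ((-1:ℝ))^ℓ = 1 := Even.neg_one_pow hevℓ
        rw [hneg] at hbR
        have hb : bR' ≤ bR := by linarith
        have hj := (h (ℓ - 1) (by omega)).2 (h0 ▸ hod)
        exact key _ _ _ _ hb hj.2
      · have hevp : Even (i + 1) := by rw [Nat.even_iff]; omega
        have hj := (h (i + 1) (by omega)).1 hevp
        exact key _ _ _ _ (offL_mono w M s s' (i + 1) hj.1 hj.2)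
          (((h i hi).2 hod).2)

/-- The simplified dynamics preserves the path domination ordering, provided the
boundary conditions are ordered accordingly: `b_{1,L}^t ≥ b_{2,L}^t` and
`(−1)^ℓ b_{1,R}^t ≥ (−1)^ℓ b_{2,R}^t` for all `t`. -/
theorem stmt19 (ℓ : ℕ) (hℓ : 1 ≤ ℓ) (w : ℕ → ℝ) (hw : ∀ i < ℓ, 0 < w i)
    (M : ℕ → Bool) (hM : AltMatching ℓ M)
    (κ : ℝ) (hκ : κ ∈ Set.Ioo (0 : ℝ) 1)
    (b1L b1R b2L b2R : ℕ → ℝ)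
    (s s' : ℕ → ℕ → ℝ × ℝ)
    (htraj : ∀ t, ∀ i < ℓ, s (t + 1) i = pstep ℓ w M κ (b1L t) (b1R t) (s t) i)
    (htraj' : ∀ t, ∀ i < ℓ, s' (t + 1) i = pstep ℓ w M κ (b2L t) (b2R t) (s' t) i)
    (hbL : ∀ t, b2L t ≤ b1L t)
    (hbR : ∀ t, (-1 : ℝ) ^ ℓ * b2R t ≤ (-1 : ℝ) ^ ℓ * b1R t)
    (h0 : PathDom ℓ (s 0) (s' 0)) :
    ∀ t, PathDom ℓ (s t) (s' t) := by
  intro t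
  induction t with
  | zero => exact h0
  | succ t ih =>
    intro i hi
    rw [htraj t i hi, htraj' t i hi]
    exact pstep_dom ℓ hℓ w M κ hκ.1.le hκ.2.le _ _ _ _ (hbL t) (hbR t) _ _ ih i hi
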